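/- Let X = SO_{2n+1}/B and Y = Sp_{2n}/B with common Weyl group 𝔅_n, and let C_{u,v}^w(X), C_{u,v}^w(Y) denote the equivariant Schubert structure coefficients, characterized by the pointwise relations ξ_u|_x · ξ_v|_x = Σ_w C_{u,v}^w ξ_w|_x for all x ∈ 𝔅_n, where ξ_w|_x is given by Billey's formula. Then C_{u,v}^w(X) = 2^{s(w)-s(u)-s(v)} · overline{C_{u,v}^w(Y)}, where the overline denotes the substitution γ_1 ↦ 2β_1, γ_i ↦ β_i (i > 1), and s(w) is the number of negative entries of w. -/

import Mathlib

/-!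
The substitution `γ_1 ↦ 2β_1`, `γ_i ↦ β_i` conjugates the type `C` Cartan matrix into the
type `B` one, so it sends each type `C` root `s_{a_1} ⋯ s_{a_{k-1}}(γ_{a_k})` to the
corresponding type `B` root, doubled exactly when `a_k = 1`. Every term of Billey's formula for
`ξ_w` therefore picks up the factor `2^{s(w)}`: `overline{ξ^C_w|_x} = 2^{s(w)} ξ^B_w|_x`.
Substituting into the type `C` relations gives a second expansion of
`2^{s(u)+s(v)} ξ^B_u|_x ξ^B_v|_x` in the `ξ^B_w|_x`, and such expansions are unique since the
matrix `(ξ^B_w|_x)` is triangular with respect to length, with nonzero diagonal.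
-/

open CoxeterSystem MvPolynomial

section Defs

variable {B : Type} [DecidableEq B] {W : Type} [Group W] {M : CoxeterMatrix B}

/-- The simple reflection action on the root lattice determined by the "Cartan" integers `A`:
`s_i` sends `α_j ↦ α_j - (A i j) • α_i` (extended linearly, where `α_j = single j 1`). -/
noncomputable def cartanRefl (A : B → B → ℤ) (i : B) (x : B →₀ ℤ) : B →₀ ℤ :=
  x - (x.sum fun j c => c * A i j) • Finsupp.single i 1

/-- The action of the word `s_{a_1} s_{a_2} ⋯ s_{a_m}` on the root lattice. -/
noncomputable def wordAct (A : B → B → ℤ) (l : List B) (x : B →₀ ℤ) : B →₀ ℤ :=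
  l.foldr (cartanRefl A) x

/-- The root `s_{a_1} ⋯ s_{a_{k-1}} (α_{a_k})` attached to position `k` of the word
`l = (a_1, …, a_m)`. -/
noncomputable def rootOf (A : B → B → ℤ) (l : List B) (k : Fin l.length) : B →₀ ℤ :=
  wordAct A (l.take k) (Finsupp.single (l.get k) 1)

/-- A vector of the root lattice is positive if it is nonzero with nonnegative coordinates
in the simple roots. -/
def IsPosRoot (x : B →₀ ℤ) : Prop := x ≠ 0 ∧ ∀ j, 0 ≤ x j

/-- Interpret a root-lattice vector `Σ c_i α_i` as the linear polynomial `Σ c_i X_i` in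
`ℤ[α_1, …, α_r]`. -/
noncomputable def toPoly (x : B →₀ ℤ) : MvPolynomial B ℤ := x.sum fun i c => c • X i

/-- `l` is a reduced word for `w`. -/
def IsReducedWordFor (cs : CoxeterSystem M W) (l : List B) (w : W) : Prop :=
  cs.IsReduced l ∧ cs.wordProd l = w

/-- The subword of `l` occupying the set of positions `J`. -/
def select (l : List B) (J : Finset (Fin l.length)) : List B :=
  ((List.finRange l.length).filter (· ∈ J)).map l.get

open Classical in
/-- Billey's restriction `ξ_w|_v`, computed from a word `l` (a reduced word for `v`):
the sum over all subwords `J ⊆ {1, …, ℓ}` of `l` that are reduced words for `w` of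
`∏_{k ∈ J} s_{a_1} ⋯ s_{a_{k-1}} (α_{a_k})`. -/
noncomputable def billey (cs : CoxeterSystem M W) (A : B → B → ℤ) (w : W) (l : List B) :
    MvPolynomial B ℤ :=
  ∑ J : Finset (Fin l.length),
    if IsReducedWordFor cs (select l J) w then ∏ k ∈ J, toPoly (rootOf A l k) else 0

/-- Bruhat order on `W`, via the subword property. -/
def bruhatLE (cs : CoxeterSystem M W) (u v : W) : Prop :=
  ∃ lv, IsReducedWordFor cs lv v ∧ ∃ lu, lu.Sublist lv ∧ IsReducedWordFor cs lu u

end Defs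

section TypeBC

/-- The Coxeter matrix shared by the root systems `B_n` and `C_n` (hyperoctahedral Weyl
group): the bond between nodes 1 and 2 (indices 0 and 1) is a 4-bond, consecutive nodes
otherwise have 3-bonds. -/
def BCMatrix (n : ℕ) : CoxeterMatrix (Fin n) where
  M := Matrix.of fun i j : Fin n =>
    if i = j then 1
      else if ((i : ℕ) = 0 ∧ (j : ℕ) = 1) ∨ ((j : ℕ) = 0 ∧ (i : ℕ) = 1) then 4
      else if (j : ℕ) + 1 = i ∨ (i : ℕ) + 1 = j then 3 else 2
  isSymm := by unfold Matrix.IsSymm; aesop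
  diagonal := by simp
  off_diagonal := by aesop

/-- The Cartan integers of type `B_n` (simple roots `β_1, …, β_n`, with `β_1` short):
`s_i (β_j) = β_j - (cartanB n i j) • β_i`; in particular `s_1 (β_2) = β_2 + 2 β_1`. -/
def cartanB (n : ℕ) (i j : Fin n) : ℤ :=
  if i = j then 2
    else if (i : ℕ) = 0 ∧ (j : ℕ) = 1 then -2
    else if (j : ℕ) + 1 = i ∨ (i : ℕ) + 1 = j then -1 else 0

/-- The Cartan integers of type `C_n` (simple roots `γ_1, …, γ_n`, with `γ_1` long):
`s_i (γ_j) = γ_j - (cartanC n i j) • γ_i`; in particular `s_2 (γ_1) = γ_1 + 2 γ_2`. -/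
def cartanC (n : ℕ) (i j : Fin n) : ℤ :=
  if i = j then 2
    else if (i : ℕ) = 1 ∧ (j : ℕ) = 0 then -2
    else if (j : ℕ) + 1 = i ∨ (i : ℕ) + 1 = j then -1 else 0

/-- The substitution `γ_1 ↦ 2 β_1`, `γ_i ↦ β_i` for `i > 1`, as an algebra endomorphism of
`ℤ[X_1, …, X_n]`. -/
noncomputable def barSub (n : ℕ) : MvPolynomial (Fin n) ℤ →ₐ[ℤ] MvPolynomial (Fin n) ℤ :=
  MvPolynomial.bind₁ fun i : Fin n =>
    if (i : ℕ) = 0 then 2 * MvPolynomial.X i else MvPolynomial.X i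

end TypeBC

section RootLattice

variable {B : Type}

theorem cartanRefl_eq (A : B → B → ℤ) (i : B) (x : B →₀ ℤ) :
    cartanRefl A i x = x - Finsupp.linearCombination ℤ (A i) x • Finsupp.single i 1 := by
  simp [cartanRefl, Finsupp.linearCombination_apply]

theorem cartanRefl_zero (A : B → B → ℤ) (i : B) : cartanRefl A i 0 = 0 := by
  simp [cartanRefl]

theorem cartanRefl_smul (A : B → B → ℤ) (i : B) (c : ℤ) (x : B →₀ ℤ) :
    cartanRefl A i (c • x) = c • cartanRefl A i x := by
  rw [cartanRefl_eq, cartanRefl_eq, map_zsmul, smul_sub, smul_assoc]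

theorem cartanRefl_involutive {A : B → B → ℤ} {i : B} (hA : A i i = 2) :
    Function.Involutive (cartanRefl A i) := by
  intro x
  rw [cartanRefl_eq, cartanRefl_eq A i x, map_sub, map_zsmul,
    Finsupp.linearCombination_single, hA]
  module

theorem wordAct_cons (A : B → B → ℤ) (a : B) (l : List B) :
    wordAct A (a :: l) = cartanRefl A a ∘ wordAct A l := rfl

theorem wordAct_zero (A : B → B → ℤ) (l : List B) : wordAct A l 0 = 0 := by
  induction l with
  | nil => rfl
  | cons a l ih => rw [wordAct_cons, Function.comp_apply, ih, cartanRefl_zero]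

theorem wordAct_smul (A : B → B → ℤ) (l : List B) (c : ℤ) (x : B →₀ ℤ) :
    wordAct A l (c • x) = c • wordAct A l x := by
  induction l with
  | nil => rfl
  | cons a l ih => simp only [wordAct_cons, Function.comp_apply, ih, cartanRefl_smul]

theorem wordAct_injective {A : B → B → ℤ} (hA : ∀ i, A i i = 2) (l : List B) :
    Function.Injective (wordAct A l) := by
  induction l with
  | nil => exact Function.injective_id
  | cons a l ih => exact (cartanRefl_involutive (hA a)).injective.comp ih

theorem rootOf_ne_zero {A : B → B → ℤ} (hA : ∀ i, A i i = 2) (l : List B)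
    (k : Fin l.length) : rootOf A l k ≠ 0 := by
  rw [rootOf, ← wordAct_zero A (l.take k), (wordAct_injective hA _).ne_iff]
  exact Finsupp.single_ne_zero.mpr one_ne_zero

end RootLattice

section Rescaling

variable {B : Type}

noncomputable def scaleRoots (d : B → ℤ) : (B →₀ ℤ) →ₗ[ℤ] (B →₀ ℤ) :=
  Finsupp.linearCombination ℤ fun j => Finsupp.single j (d j)

theorem scaleRoots_single (d : B → ℤ) (j : B) (c : ℤ) :
    scaleRoots d (Finsupp.single j c) = Finsupp.single j (c * d j) := by
  rw [scaleRoots, Finsupp.linearCombination_single, Finsupp.smul_single, smul_eq_mul]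

variable {A A' : B → B → ℤ} {d : B → ℤ}

theorem scaleRoots_cartanRefl (hd : ∀ i j, d j * A i j = d i * A' i j) (i : B) (x : B →₀ ℤ) :
    scaleRoots d (cartanRefl A' i x) = cartanRefl A i (scaleRoots d x) := by
  have hlin : Finsupp.linearCombination ℤ (A i) ∘ₗ scaleRoots d =
      d i • Finsupp.linearCombination ℤ (A' i) :=
    Finsupp.lhom_ext fun j c => by
      simp only [LinearMap.comp_apply, scaleRoots_single, LinearMap.smul_apply,
        Finsupp.linearCombination_single, smul_eq_mul]
      rw [mul_assoc, hd, mul_left_comm]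
  rw [cartanRefl_eq, cartanRefl_eq, map_sub, map_zsmul, scaleRoots_single,
    ← LinearMap.comp_apply, hlin, LinearMap.smul_apply, one_mul, smul_eq_mul, mul_comm,
    mul_smul, Finsupp.smul_single_one]

theorem scaleRoots_wordAct (hd : ∀ i j, d j * A i j = d i * A' i j) (l : List B)
    (x : B →₀ ℤ) : scaleRoots d (wordAct A' l x) = wordAct A l (scaleRoots d x) := by
  induction l with
  | nil => rfl
  | cons a l ih =>
    simp only [wordAct_cons, Function.comp_apply, scaleRoots_cartanRefl hd, ih]

theorem scaleRoots_rootOf (hd : ∀ i j, d j * A i j = d i * A' i j) (l : List B)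
    (k : Fin l.length) : scaleRoots d (rootOf A' l k) = d (l.get k) • rootOf A l k := by
  rw [rootOf, rootOf, scaleRoots_wordAct hd, scaleRoots_single, one_mul,
    ← wordAct_smul, Finsupp.smul_single_one]

end Rescaling

section Polynomials

variable {B : Type}

theorem toPoly_injective : Function.Injective (toPoly (B := B)) :=
  MvPolynomial.linearIndependent_X B ℤ

theorem toPoly_ne_zero {x : B →₀ ℤ} (hx : x ≠ 0) : toPoly x ≠ 0 := by
  simpa [toPoly] using toPoly_injective.ne hx

theorem toPoly_smul (c : ℤ) (x : B →₀ ℤ) : toPoly (c • x) = c • toPoly x :=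
  map_zsmul (Finsupp.linearCombination ℤ X) c x

theorem map_toPoly {d : B → ℤ} (ψ : MvPolynomial B ℤ →ₐ[ℤ] MvPolynomial B ℤ)
    (hψ : ∀ i, ψ (X i) = d i • X i) (x : B →₀ ℤ) :
    ψ (toPoly x) = toPoly (scaleRoots d x) := by
  have hlin : ψ.toLinearMap ∘ₗ Finsupp.linearCombination ℤ X =
      Finsupp.linearCombination ℤ X ∘ₗ scaleRoots d :=
    Finsupp.lhom_ext fun j c => by
      rw [LinearMap.comp_apply, LinearMap.comp_apply, scaleRoots_single,
        Finsupp.linearCombination_single, Finsupp.linearCombination_single,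
        AlgHom.toLinearMap_apply, map_zsmul, hψ, mul_smul]
  exact LinearMap.congr_fun hlin x

end Polynomials

section Subwords

variable {B : Type}

theorem toFinset_filter_finRange_mem {m : ℕ} (J : Finset (Fin m)) :
    ((List.finRange m).filter (· ∈ J)).toFinset = J := by
  ext k
  simp

theorem nodup_filter_finRange {m : ℕ} (J : Finset (Fin m)) :
    ((List.finRange m).filter (· ∈ J)).Nodup :=
  (List.nodup_finRange m).filter _

theorem length_select (l : List B) (J : Finset (Fin l.length)) :
    (select l J).length = J.card := by
  rw [select, List.length_map, ← List.toFinset_card_of_nodup (nodup_filter_finRange J),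
    toFinset_filter_finRange_mem]

theorem select_univ (l : List B) : select l Finset.univ = l := by
  simp [select, List.map_get_finRange]

theorem prod_map_select {R : Type} [CommMonoid R] (l : List B) (J : Finset (Fin l.length))
    (g : B → R) : ((select l J).map g).prod = ∏ k ∈ J, g (l.get k) := by
  rw [select, List.map_map, ← List.prod_toFinset _ (nodup_filter_finRange J),
    toFinset_filter_finRange_mem, Function.comp_def]

end Subwords

section Billey

variable {B W : Type} [Group W] {M : CoxeterMatrix B} (cs : CoxeterSystem M W)

theorem IsReducedWordFor.length_eq {l : List B} {w : W} (hl : IsReducedWordFor cs l w) :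
    cs.length w = l.length :=
  hl.2 ▸ hl.1

theorem eq_univ_of_isReducedWordFor_select {l : List B} {w w' : W} {J : Finset (Fin l.length)}
    (hl : IsReducedWordFor cs l w) (hJ : IsReducedWordFor cs (select l J) w')
    (hlen : cs.length w ≤ cs.length w') : J = Finset.univ := by
  rw [hl.length_eq, hJ.length_eq, length_select] at hlen
  exact Finset.eq_univ_of_card J (le_antisymm (Finset.card_le_univ J) (by simpa using hlen))

theorem billey_eq_prod_of_isReducedWordFor (A : B → B → ℤ) {l : List B} {w : W}
    (hl : IsReducedWordFor cs l w) :
    billey cs A w l = ∏ k : Fin l.length, toPoly (rootOf A l k) := by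
  classical
  rw [billey, Finset.sum_eq_single_of_mem Finset.univ (Finset.mem_univ _)
    fun J _ hJ => if_neg fun hred => hJ (eq_univ_of_isReducedWordFor_select cs hl hred le_rfl),
    if_pos (by rwa [select_univ])]

theorem billey_eq_zero_of_length_le (A : B → B → ℤ) {l : List B} {w w' : W}
    (hl : IsReducedWordFor cs l w) (hne : w' ≠ w) (hlen : cs.length w ≤ cs.length w') :
    billey cs A w' l = 0 := by
  classical
  refine Finset.sum_eq_zero fun J _ => if_neg fun hJ => hne ?_
  rw [← hJ.2, eq_univ_of_isReducedWordFor_select cs hl hJ hlen, select_univ, hl.2]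

theorem billey_ne_zero_of_isReducedWordFor {A : B → B → ℤ} (hA : ∀ i, A i i = 2) {l : List B}
    {w : W} (hl : IsReducedWordFor cs l w) : billey cs A w l ≠ 0 := by
  rw [billey_eq_prod_of_isReducedWordFor cs A hl]
  exact Finset.prod_ne_zero_iff.mpr fun k _ => toPoly_ne_zero (rootOf_ne_zero hA l k)

theorem map_billey_of_scaleRoots {A A' : B → B → ℤ} {d : B → ℤ}
    (hd : ∀ i j, d j * A i j = d i * A' i j) (ψ : MvPolynomial B ℤ →ₐ[ℤ] MvPolynomial B ℤ)
    (hψ : ∀ i, ψ (X i) = d i • X i) {w : W} {c : ℤ}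
    (hc : ∀ l, IsReducedWordFor cs l w → (l.map d).prod = c) (l : List B) :
    ψ (billey cs A' w l) = c • billey cs A w l := by
  classical
  rw [billey, billey, map_sum, Finset.smul_sum]
  refine Finset.sum_congr rfl fun J _ => ?_
  split_ifs with hred
  · simp only [map_prod, map_toPoly ψ hψ, scaleRoots_rootOf hd, toPoly_smul]
    rw [Finset.prod_smul, ← prod_map_select, hc _ hred]
  · rw [map_zero, smul_zero]

end Billey

theorem eq_of_forall_sum_mul_eq_of_triangular {R ι : Type*} [CommRing R] [NoZeroDivisors R]
    [Fintype ι] (ℓ : ι → ℕ) (f : ι → ι → R) (hf : ∀ i j, i ≠ j → ℓ j ≤ ℓ i → f i j = 0)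
    (hff : ∀ i, f i i ≠ 0) {a b : ι → R} (hab : ∀ j, ∑ i, a i * f i j = ∑ i, b i * f i j) :
    a = b := by
  funext j
  induction hj : ℓ j using Nat.strong_induction_on generalizing j with
  | _ m ih =>
  have hsum : ∑ i, (a i - b i) * f i j = 0 := by
    simp only [sub_mul, Finset.sum_sub_distrib, hab j, sub_self]
  rw [Finset.sum_eq_single j (fun i _ hij => ?_) (by simp)] at hsum
  · exact sub_eq_zero.mp ((mul_eq_zero.mp hsum).resolve_right (hff j))
  · rcases lt_or_ge (ℓ i) m with hlt | hle
    · rw [ih _ hlt i rfl, sub_self, zero_mul]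
    · rw [hf i j hij (hj ▸ hle), mul_zero]

section TypeBC

def bcScale (n : ℕ) (i : Fin n) : ℤ := if (i : ℕ) = 0 then 2 else 1

theorem bcScale_mul_cartanB (n : ℕ) (i j : Fin n) :
    bcScale n j * cartanB n i j = bcScale n i * cartanC n i j := by
  simp only [bcScale, cartanB, cartanC, Fin.ext_iff]
  split_ifs <;> omega

theorem cartanB_self (n : ℕ) (i : Fin n) : cartanB n i i = 2 := if_pos rfl

theorem barSub_X (n : ℕ) (i : Fin n) : barSub n (X i) = bcScale n i • X i := by
  rw [barSub, bind₁_X_right, bcScale]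
  split_ifs <;> simp

theorem prod_map_bcScale {n : ℕ} (hn : 0 < n) (l : List (Fin n)) :
    (l.map (bcScale n)).prod = 2 ^ l.count ⟨0, hn⟩ :=
  List.prod_map_eq_pow_single _ _ fun _ hi _ => if_neg fun h => hi (Fin.ext h)

theorem barSub_billey_cartanC {n : ℕ} (hn : 0 < n) {W : Type} [Group W]
    (cs : CoxeterSystem (BCMatrix n) W) {w : W} {k : ℕ}
    (hk : ∀ l, IsReducedWordFor cs l w → l.count ⟨0, hn⟩ = k) (l : List (Fin n)) :
    barSub n (billey cs (cartanC n) w l) = 2 ^ k * billey cs (cartanB n) w l := by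
  rw [map_billey_of_scaleRoots cs (bcScale_mul_cartanB n) (barSub n) (barSub_X n)
    (c := 2 ^ k) fun l hl => by rw [prod_map_bcScale hn, hk l hl], zsmul_eq_mul, Int.cast_pow,
    Int.cast_ofNat]

end TypeBC

open scoped Classical in
/-- Let `X = SO_{2n+1}/B` and `Y = Sp_{2n}/B`, with common hyperoctahedral Weyl group
`𝔅_n ≅ W`. Let `CX` (resp. `CY`) be the equivariant Schubert structure coefficients of `X`
(resp. `Y`), characterized by the pointwise relations
`ξ_u|_x · ξ_v|_x = Σ_w C_{u,v}^w ξ_w|_x` for all `x`, where `ξ_w|_x` is given by Billey's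
formula in type `B` (resp. type `C`).  Then, in the fraction field of `ℤ[β_1, …, β_n]`,
`C_{u,v}^w(X) = 2^(s(w) - s(u) - s(v)) · overline{C_{u,v}^w(Y)}`, where the overline denotes
the substitution `γ_1 ↦ 2β_1`, `γ_i ↦ β_i (i > 1)`, and `s(w)` is the number of negative
entries of `w` (characterized by: every reduced word of `w` uses `s_1` exactly `s w` times). -/
theorem structure_coeff_B_eq_two_pow_mul_structure_coeff_C
    {n : ℕ} (hn : 0 < n) {W : Type} [Group W] [Fintype W]
    (cs : CoxeterSystem (BCMatrix n) W)
    (s : W → ℕ)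
    (hs : ∀ (w : W) (l : List (Fin n)), IsReducedWordFor cs l w →
      l.count (⟨0, hn⟩ : Fin n) = s w)
    (r : W → List (Fin n)) (hr : ∀ x, IsReducedWordFor cs (r x) x)
    (CX CY : W → W → W → MvPolynomial (Fin n) ℤ)
    (hCX : ∀ u v x : W,
      billey cs (cartanB n) u (r x) * billey cs (cartanB n) v (r x) =
        ∑ w : W, CX u v w * billey cs (cartanB n) w (r x))
    (hCY : ∀ u v x : W,
      billey cs (cartanC n) u (r x) * billey cs (cartanC n) v (r x) =
        ∑ w : W, CY u v w * billey cs (cartanC n) w (r x))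
    (u v w : W) :
    algebraMap (MvPolynomial (Fin n) ℤ) (FractionRing (MvPolynomial (Fin n) ℤ)) (CX u v w) =
      (2 : FractionRing (MvPolynomial (Fin n) ℤ)) ^ ((s w : ℤ) - (s u : ℤ) - (s v : ℤ)) *
        algebraMap (MvPolynomial (Fin n) ℤ) (FractionRing (MvPolynomial (Fin n) ℤ))
          (barSub n (CY u v w)) := by
  set ξ : W → W → MvPolynomial (Fin n) ℤ := fun w x => billey cs (cartanB n) w (r x)
  have hbar : ∀ w x, barSub n (billey cs (cartanC n) w (r x)) = 2 ^ s w * ξ w x :=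
    fun w x => barSub_billey_cartanC hn cs (hs w) (r x)
  have hpoly : 2 ^ (s u + s v) * CX u v w = 2 ^ s w * barSub n (CY u v w) := by
    refine congrFun (eq_of_forall_sum_mul_eq_of_triangular cs.length ξ
      (fun w' x hne hle => billey_eq_zero_of_length_le cs _ (hr x) hne hle)
      (fun x => billey_ne_zero_of_isReducedWordFor cs (cartanB_self n) (hr x))
      (a := fun w' => 2 ^ (s u + s v) * CX u v w')
      (b := fun w' => 2 ^ s w' * barSub n (CY u v w')) fun x => ?_) w
    calc ∑ w', 2 ^ (s u + s v) * CX u v w' * ξ w' x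
        = (2 ^ s u * ξ u x) * (2 ^ s v * ξ v x) := by
          simp only [ξ, mul_assoc, ← Finset.mul_sum, ← hCX]
          ring
      _ = ∑ w', barSub n (CY u v w') * (2 ^ s w' * ξ w' x) := by
          rw [← hbar, ← hbar, ← map_mul, hCY, map_sum]
          simp only [map_mul, hbar]
      _ = ∑ w', 2 ^ s w' * barSub n (CY u v w') * ξ w' x :=
          Finset.sum_congr rfl fun _ _ => by ring
  have hpolyK := congrArg (algebraMap _ (FractionRing (MvPolynomial (Fin n) ℤ))) hpoly
  simp only [map_mul, map_pow, map_ofNat] at hpolyK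
  have h2 : (2 : FractionRing (MvPolynomial (Fin n) ℤ)) ≠ 0 := two_ne_zero
  rw [zpow_sub₀ h2, zpow_sub₀ h2, zpow_natCast, zpow_natCast, zpow_natCast]
  field_simp
  linear_combination hpolyK
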